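/- arXiv:2302.00245 — 3 statements merged into one kernel-verified Lean document; each statement's English description precedes it below -/
import Mathlib

section
/- Let (u^k_n, v^k_n) be a solution of the QLB scheme such that n ↦ |u^0_n|² + |v^0_n|² is summable over ℤ. Then for every k ≥ 0 the function n ↦ |u^k_n|² + |v^k_n|² is summable and ∑_{n∈ℤ}(|u^k_n|² + |v^k_n|²) = ∑_{n∈ℤ}(|u^0_n|² + |v^0_n|²). -/
open Complex

noncomputable section

/-- `G(u,v) = conj(u)·v + u·conj(v)`. -/
def Gc (u v : ℂ) : ℂ := (starRingEnd ℂ) u * v + u * (starRingEnd ℂ) v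

/-- One step of the quantum lattice Boltzmann (QLB) scheme:
`a, b` are the values `u^k_n, v^k_n` and `a', b'` the values `u^{k+1}_{n+1}, v^{k+1}_{n-1}`. -/
def QLBStep (h m α β : ℝ) (a b a' b' : ℂ) : Prop :=
  a' - a = (Complex.I * (m : ℂ) * (h : ℂ) / 2) * (b' + b)
      + (Complex.I * (α : ℂ) * (h : ℂ) / 2) * (a' + a) * ((‖b‖ ^ 2 : ℝ) : ℂ)
      + (Complex.I * (β : ℂ) * (h : ℂ) / 2) * (b' + b) * Gc a b
  ∧ b' - b = (Complex.I * (m : ℂ) * (h : ℂ) / 2) * (a' + a)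
      + (Complex.I * (α : ℂ) * (h : ℂ) / 2) * (b' + b) * ((‖a‖ ^ 2 : ℝ) : ℂ)
      + (Complex.I * (β : ℂ) * (h : ℂ) / 2) * (a' + a) * Gc a b

/-- `(u, v)` is a solution of the QLB scheme. -/
def IsQLB (h m α β : ℝ) (u v : ℕ → ℤ → ℂ) : Prop :=
  ∀ (k : ℕ) (n : ℤ), QLBStep h m α β (u k n) (v k n) (u (k + 1) (n + 1)) (v (k + 1) (n - 1))

/- Multiplying the first equation by `conj (a' + a)`, the second by `conj (b' + b)` and adding
their conjugates, the right-hand sides cancel: each is `i` times a real coefficient times a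
Hermitian expression. What remains is `|a'|² - |a|² + |b'|² - |b|² = 0`. -/
lemma QLBStep.norm_sq_add_norm_sq_eq {h m α β : ℝ} {a b a' b' : ℂ}
    (H : QLBStep h m α β a b a' b') : ‖a'‖ ^ 2 + ‖b'‖ ^ 2 = ‖a‖ ^ 2 + ‖b‖ ^ 2 := by
  obtain ⟨e1, e2⟩ := H
  simp only [Gc] at e1 e2
  have ce1 := congrArg (starRingEnd ℂ) e1
  have ce2 := congrArg (starRingEnd ℂ) e2
  simp only [map_sub, map_add, map_mul, map_div₀, Complex.conj_I, Complex.conj_ofReal,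
    map_ofNat, Complex.conj_conj] at ce1 ce2
  apply Complex.ofReal_injective
  push_cast [Complex.sq_norm, Complex.normSq_eq_conj_mul_self]
  linear_combination (((starRingEnd ℂ) a' + (starRingEnd ℂ) a) * e1
    + ((starRingEnd ℂ) b' + (starRingEnd ℂ) b) * e2 + (a' + a) * ce1 + (b' + b) * ce2) / 2

lemma hasSum_add_of_hasSum_add_shift {f g : ℤ → ℝ} {s : ℝ} (p q : ℤ)
    (hf : ∀ n, 0 ≤ f n) (hg : ∀ n, 0 ≤ g n) (hs : HasSum (fun n => f (n + p) + g (n + q)) s) :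
    HasSum (fun n => f n + g n) s := by
  have hfp : Summable fun n => f (n + p) :=
    hs.summable.of_nonneg_of_le (fun n => hf _) fun n => le_add_of_nonneg_right (hg _)
  have hgq : Summable fun n => g (n + q) :=
    hs.summable.of_nonneg_of_le (fun n => hg _) fun n => le_add_of_nonneg_left (hf _)
  rw [hs.unique (hfp.hasSum.add hgq.hasSum)]
  exact ((Equiv.addRight p).hasSum_iff.mp hfp.hasSum).add
    ((Equiv.addRight q).hasSum_iff.mp hgq.hasSum)

lemma IsQLB.hasSum_charge {h m α β : ℝ} {u v : ℕ → ℤ → ℂ} (huv : IsQLB h m α β u v)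
    {s : ℝ} (h0 : HasSum (fun n => ‖u 0 n‖ ^ 2 + ‖v 0 n‖ ^ 2) s) (k : ℕ) :
    HasSum (fun n => ‖u k n‖ ^ 2 + ‖v k n‖ ^ 2) s := by
  induction k with
  | zero => exact h0
  | succ k ih =>
    refine hasSum_add_of_hasSum_add_shift 1 (-1) (fun _ => sq_nonneg _) (fun _ => sq_nonneg _) ?_
    refine ih.congr_fun fun n => ?_
    rw [← sub_eq_add_neg]
    exact (huv k n).norm_sq_add_norm_sq_eq

theorem stmt1_general (h m α β : ℝ)
    (u v : ℕ → ℤ → ℂ) (huv : IsQLB h m α β u v)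
    (hsum : Summable fun n : ℤ => ‖u 0 n‖ ^ 2 + ‖v 0 n‖ ^ 2) :
    ∀ k : ℕ,
      (Summable fun n : ℤ => ‖u k n‖ ^ 2 + ‖v k n‖ ^ 2) ∧
      (∑' n : ℤ, (‖u k n‖ ^ 2 + ‖v k n‖ ^ 2))
        = ∑' n : ℤ, (‖u 0 n‖ ^ 2 + ‖v 0 n‖ ^ 2) := fun k =>
  have hk := huv.hasSum_charge hsum.hasSum k
  ⟨hk.summable, hk.tsum_eq⟩

/-- Conservation of the total charge: summability of the initial data propagates
and the total sum is conserved at every time level. -/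
theorem stmt1 (h m α β : ℝ) (hh0 : 0 < h) (hm : 0 ≤ m)
    (u v : ℕ → ℤ → ℂ) (huv : IsQLB h m α β u v)
    (hsum : Summable fun n : ℤ => ‖u 0 n‖ ^ 2 + ‖v 0 n‖ ^ 2) :
    ∀ k : ℕ,
      (Summable fun n : ℤ => ‖u k n‖ ^ 2 + ‖v k n‖ ^ 2) ∧
      (∑' n : ℤ, (‖u k n‖ ^ 2 + ‖v k n‖ ^ 2))
        = ∑' n : ℤ, (‖u 0 n‖ ^ 2 + ‖v 0 n‖ ^ 2) :=
  stmt1_general h m α β u v huv hsum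

end
end

section
/- Under the initial-data assumptions, for every ε > 0 there exist constants A_ε > 0 and h_ε ∈ (0,1), independent of h, such that for all h ∈ (0,h_ε) and all t ≥ 0: ∫_{|x| ≥ A_ε + t} (|u^{(h)}(x,t)|² + |v^{(h)}(x,t)|²) dx ≤ ε. -/
/-!
Each QLB step is a Crank–Nicolson update `w' - w = (i h / 2) M (w' + w)` with a real symmetric
matrix `M`, so it conserves `|u|² + |v|²` cell by cell, while `u` moves one cell to the right and
`v` one cell to the left. Hence the energy of the interpolant in `|x| ≥ A + t` at time `t` is at
most the initial energy in `|x| ≥ A` (finite speed of propagation). The latter is at most twice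
the squared `L²` distance to `(u₀, v₀)` plus twice the tail of `(u₀, v₀)`, which is small for `A`
large and `h` small.
-/

open Complex MeasureTheory Filter
open scoped ENNReal

noncomputable section

/-- The piecewise-constant interpolant: `interp h w x t = w^k_n` for
`x ∈ [nh, (n+1)h)` and `t ∈ [kh, (k+1)h)` (for `t ≥ 0`). -/
def interp (h : ℝ) (w : ℕ → ℤ → ℂ) (x t : ℝ) : ℂ := w ⌊t / h⌋₊ ⌊x / h⌋

open Topology

lemma conj_Gc (a b : ℂ) : (starRingEnd ℂ) (Gc a b) = Gc a b := by
  simp only [Gc, map_add, map_mul, Complex.conj_conj]; ring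

theorem QLBStep.norm_sq_add_norm_sq {h m α β : ℝ} {a b a' b' : ℂ}
    (hs : QLBStep h m α β a b a' b') : ‖a'‖ ^ 2 + ‖b'‖ ^ 2 = ‖a‖ ^ 2 + ‖b‖ ^ 2 := by
  obtain ⟨hu, hv⟩ := hs
  have hu' := congrArg (starRingEnd ℂ) hu
  have hv' := congrArg (starRingEnd ℂ) hv
  simp only [map_sub, map_add, map_mul, map_div₀, Complex.conj_I, Complex.conj_ofReal,
    map_ofNat, conj_Gc] at hu' hv'
  simp only [Complex.sq_norm]
  apply Complex.ofReal_injective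
  push_cast [← Complex.mul_conj]
  -- `(a' - a) conj (a' + a) + (a' + a) conj (a' - a) = 2 (|a'|² - |a|²)`; after substituting the
  -- scheme, the terms cancel because `conj (i h / 2) = - i h / 2` and the coefficients are real.
  linear_combination ((starRingEnd ℂ) a' + (starRingEnd ℂ) a) / 2 * hu + (a' + a) / 2 * hu'
    + ((starRingEnd ℂ) b' + (starRingEnd ℂ) b) / 2 * hv + (b' + b) / 2 * hv'

theorem QLBStep.enorm_sq_add_enorm_sq {h m α β : ℝ} {a b a' b' : ℂ}
    (hs : QLBStep h m α β a b a' b') : ‖a'‖ₑ ^ 2 + ‖b'‖ₑ ^ 2 = ‖a‖ₑ ^ 2 + ‖b‖ₑ ^ 2 := by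
  simp only [← ofReal_norm, ← ENNReal.ofReal_pow (norm_nonneg _)]
  rw [← ENNReal.ofReal_add (by positivity) (by positivity),
    ← ENNReal.ofReal_add (by positivity) (by positivity), hs.norm_sq_add_norm_sq]

lemma setLIntegral_abs_ge_le_comp_add (g : ℝ → ℝ≥0∞) (R s : ℝ) :
    ∫⁻ x in {x | R + |s| ≤ |x|}, g x ≤ ∫⁻ x in {x | R ≤ |x|}, g (x + s) := by
  rw [← (measurePreserving_add_right volume s).setLIntegral_comp_preimage_emb
    (measurableEmbedding_addRight s)]
  refine lintegral_mono_set fun x hx => ?_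
  have := abs_add_le x s
  simp only [Set.mem_preimage, Set.mem_ofPred_eq] at hx ⊢
  linarith

lemma measurable_comp_floor_div {β : Type*} [MeasurableSpace β] (h : ℝ) (w : ℤ → β) :
    Measurable fun x : ℝ => w ⌊x / h⌋ :=
  Measurable.of_discrete.comp (Int.measurable_floor.comp (measurable_id.div_const h))

lemma measurable_interp (h t : ℝ) (w : ℕ → ℤ → ℂ) : Measurable fun x => interp h w x t :=
  measurable_comp_floor_div h (w ⌊t / h⌋₊)

def cellEnergy (h : ℝ) (u v : ℤ → ℂ) (x : ℝ) : ℝ≥0∞ := ‖u ⌊x / h⌋‖ₑ ^ 2 + ‖v ⌊x / h⌋‖ₑ ^ 2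

lemma setLIntegral_cellEnergy_le_of_step {h : ℝ} (hh : 0 < h) {u v u' v' : ℤ → ℂ}
    (hstep : ∀ n, ‖u' (n + 1)‖ₑ ^ 2 + ‖v' (n - 1)‖ₑ ^ 2 = ‖u n‖ₑ ^ 2 + ‖v n‖ₑ ^ 2) (R : ℝ) :
    ∫⁻ x in {x | R + h ≤ |x|}, cellEnergy h u' v' x ≤
      ∫⁻ x in {x | R ≤ |x|}, cellEnergy h u v x := by
  have hright (x : ℝ) : ⌊(x + h) / h⌋ = ⌊x / h⌋ + 1 := by
    rw [add_div, div_self hh.ne', Int.floor_add_one]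
  have hleft (x : ℝ) : ⌊(x + -h) / h⌋ = ⌊x / h⌋ - 1 := by
    rw [← sub_eq_add_neg, sub_div, div_self hh.ne', Int.floor_sub_one]
  have hu := setLIntegral_abs_ge_le_comp_add (fun x => ‖u' ⌊x / h⌋‖ₑ ^ 2) R h
  have hv := setLIntegral_abs_ge_le_comp_add (fun x => ‖v' ⌊x / h⌋‖ₑ ^ 2) R (-h)
  simp only [abs_neg, abs_of_pos hh, hright, hleft] at hu hv
  calc ∫⁻ x in {x | R + h ≤ |x|}, cellEnergy h u' v' x
      = (∫⁻ x in {x | R + h ≤ |x|}, ‖u' ⌊x / h⌋‖ₑ ^ 2)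
          + ∫⁻ x in {x | R + h ≤ |x|}, ‖v' ⌊x / h⌋‖ₑ ^ 2 :=
        lintegral_add_left ((measurable_comp_floor_div h u').enorm.pow_const 2) _
    _ ≤ (∫⁻ x in {x | R ≤ |x|}, ‖u' (⌊x / h⌋ + 1)‖ₑ ^ 2)
          + ∫⁻ x in {x | R ≤ |x|}, ‖v' (⌊x / h⌋ - 1)‖ₑ ^ 2 := add_le_add hu hv
    _ ≤ ∫⁻ x in {x | R ≤ |x|}, (‖u' (⌊x / h⌋ + 1)‖ₑ ^ 2 + ‖v' (⌊x / h⌋ - 1)‖ₑ ^ 2) :=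
        le_lintegral_add _ _
    _ = ∫⁻ x in {x | R ≤ |x|}, cellEnergy h u v x := by simp only [hstep, cellEnergy]

lemma setLIntegral_cellEnergy_le_of_forall_step {h : ℝ} (hh : 0 < h) {u v : ℕ → ℤ → ℂ}
    (hstep : ∀ k n, ‖u (k + 1) (n + 1)‖ₑ ^ 2 + ‖v (k + 1) (n - 1)‖ₑ ^ 2 =
      ‖u k n‖ₑ ^ 2 + ‖v k n‖ₑ ^ 2) (k : ℕ) (R : ℝ) :
    ∫⁻ x in {x | R + k * h ≤ |x|}, cellEnergy h (u k) (v k) x ≤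
      ∫⁻ x in {x | R ≤ |x|}, cellEnergy h (u 0) (v 0) x := by
  induction k generalizing R with
  | zero => simp
  | succ k ih =>
    calc ∫⁻ x in {x | R + ↑(k + 1) * h ≤ |x|}, cellEnergy h (u (k + 1)) (v (k + 1)) x
        = ∫⁻ x in {x | (R + k * h) + h ≤ |x|}, cellEnergy h (u (k + 1)) (v (k + 1)) x := by
          push_cast; ring_nf
      _ ≤ ∫⁻ x in {x | R + k * h ≤ |x|}, cellEnergy h (u k) (v k) x :=
          setLIntegral_cellEnergy_le_of_step hh (hstep k) _
      _ ≤ _ := ih R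

theorem IsQLB.setLIntegral_cellEnergy_le {h m α β : ℝ} {u v : ℕ → ℤ → ℂ}
    (hQ : IsQLB h m α β u v) (hh : 0 < h) (R : ℝ) {t : ℝ} (ht : 0 ≤ t) :
    ∫⁻ x in {x | R + t ≤ |x|}, cellEnergy h (u ⌊t / h⌋₊) (v ⌊t / h⌋₊) x ≤
      ∫⁻ x in {x | R ≤ |x|}, cellEnergy h (u 0) (v 0) x := by
  have hkt : (⌊t / h⌋₊ : ℝ) * h ≤ t := (le_div_iff₀ hh).1 (Nat.floor_le (by positivity))
  refine le_trans (lintegral_mono_set fun x hx => ?_)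
    (setLIntegral_cellEnergy_le_of_forall_step hh (fun k n => (hQ k n).enorm_sq_add_enorm_sq) _ R)
  simp only [Set.mem_ofPred_eq] at hx ⊢
  linarith

lemma setIntegral_interp_norm_sq_add (h t : ℝ) (u v : ℕ → ℤ → ℂ) (S : Set ℝ) :
    ∫ x in S, (‖interp h u x t‖ ^ 2 + ‖interp h v x t‖ ^ 2) =
      (∫⁻ x in S, cellEnergy h (u ⌊t / h⌋₊) (v ⌊t / h⌋₊) x).toReal := by
  have hmeas (w : ℕ → ℤ → ℂ) : Measurable fun x => ‖interp h w x t‖ ^ 2 :=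
    (measurable_interp h t w).norm.pow_const 2
  rw [integral_eq_lintegral_of_nonneg_ae (f := fun x => ‖interp h u x t‖ ^ 2 + ‖interp h v x t‖ ^ 2)
    (ae_of_all _ fun x => by positivity) ((hmeas u).add (hmeas v)).aestronglyMeasurable]
  congr 1
  refine lintegral_congr fun x => ?_
  rw [ENNReal.ofReal_add (by positivity) (by positivity), ENNReal.ofReal_pow (norm_nonneg _),
    ENNReal.ofReal_pow (norm_nonneg _), ofReal_norm, ofReal_norm]
  rfl

lemma tendsto_setLIntegral_abs_ge_atTop {μ : Measure ℝ} {f : ℝ → ℝ≥0∞} (hf : ∫⁻ x, f x ∂μ ≠ ∞) :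
    Tendsto (fun R => ∫⁻ x in {x | R ≤ |x|}, f x ∂μ) atTop (𝓝 0) := by
  have hmeas (R : ℝ) : MeasurableSet {x : ℝ | R ≤ |x|} :=
    measurableSet_le measurable_const measurable_abs
  have hanti : Antitone fun R : ℝ => {x : ℝ | R ≤ |x|} := fun R R' hR x hx => hR.trans hx
  have hempty : (⋂ R : ℝ, {x : ℝ | R ≤ |x|}) = ∅ := Set.eq_empty_of_forall_notMem fun x hx =>
    (lt_add_one |x|).not_ge (Set.mem_iInter.1 hx (|x| + 1))
  have hfin : μ.withDensity f {x | 0 ≤ |x|} ≠ ∞ := by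
    rw [withDensity_apply _ (hmeas 0)]
    exact ne_top_of_le_ne_top hf (setLIntegral_le_lintegral _ _)
  have := tendsto_measure_iInter_atTop (μ := μ.withDensity f)
    (fun R => (hmeas R).nullMeasurableSet) hanti ⟨0, hfin⟩
  rw [hempty, measure_empty] at this
  exact this.congr fun R => withDensity_apply _ (hmeas R)

section SquareIntegrable

variable {α E : Type*} [MeasurableSpace α] [NormedAddCommGroup E] {μ : Measure α}

lemma lintegral_enorm_sq_eq_eLpNorm_sq (f : α → E) :
    ∫⁻ x, ‖f x‖ₑ ^ 2 ∂μ = eLpNorm f 2 μ ^ 2 := by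
  simpa only [ENNReal.coe_ofNat, NNReal.coe_ofNat, ENNReal.rpow_two] using
    (eLpNorm_nnreal_pow_eq_lintegral (μ := μ) (f := f) (p := 2) two_ne_zero).symm

lemma MeasureTheory.MemLp.lintegral_enorm_sq_add_ne_top {f g : α → E} (hf : MemLp f 2 μ)
    (hg : MemLp g 2 μ) : ∫⁻ x, (‖f x‖ₑ ^ 2 + ‖g x‖ₑ ^ 2) ∂μ ≠ ∞ := by
  rw [lintegral_add_right' _ (hg.1.enorm.pow_const 2), lintegral_enorm_sq_eq_eLpNorm_sq,
    lintegral_enorm_sq_eq_eLpNorm_sq]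
  exact ENNReal.add_ne_top.2 ⟨ENNReal.pow_ne_top hf.2.ne, ENNReal.pow_ne_top hg.2.ne⟩

lemma enorm_sq_le_two_mul (a b : E) : ‖a‖ₑ ^ 2 ≤ 2 * (‖a - b‖ₑ ^ 2 + ‖b‖ₑ ^ 2) := by
  have h : ‖a‖₊ ≤ ‖a - b‖₊ + ‖b‖₊ := by simpa using nnnorm_add_le (a - b) b
  have : ‖a‖₊ ^ 2 ≤ 2 * (‖a - b‖₊ ^ 2 + ‖b‖₊ ^ 2) :=
    (pow_le_pow_left₀ zero_le h 2).trans add_sq_le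
  simp only [enorm_eq_nnnorm]
  exact_mod_cast this

lemma setLIntegral_enorm_sq_add_le {f g u v : α → E} (hg : AEStronglyMeasurable g μ)
    (hu : AEStronglyMeasurable u μ) (hv : AEStronglyMeasurable v μ) (S : Set α) :
    ∫⁻ x in S, (‖f x‖ₑ ^ 2 + ‖g x‖ₑ ^ 2) ∂μ ≤
      2 * (eLpNorm (fun x => f x - u x) 2 μ + eLpNorm (fun x => g x - v x) 2 μ) ^ 2
        + 2 * ∫⁻ x in S, (‖u x‖ₑ ^ 2 + ‖v x‖ₑ ^ 2) ∂μ := by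
  have hdiff : ∫⁻ x in S, (‖f x - u x‖ₑ ^ 2 + ‖g x - v x‖ₑ ^ 2) ∂μ ≤
      (eLpNorm (fun x => f x - u x) 2 μ + eLpNorm (fun x => g x - v x) 2 μ) ^ 2 := calc
    _ ≤ ∫⁻ x, (‖f x - u x‖ₑ ^ 2 + ‖g x - v x‖ₑ ^ 2) ∂μ := setLIntegral_le_lintegral _ _
    _ = eLpNorm (fun x => f x - u x) 2 μ ^ 2 + eLpNorm (fun x => g x - v x) 2 μ ^ 2 := by
      have hm : AEMeasurable (fun x => ‖g x - v x‖ₑ ^ 2) μ := (hg.sub hv).enorm.pow_const 2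
      rw [lintegral_add_right' _ hm, lintegral_enorm_sq_eq_eLpNorm_sq,
        lintegral_enorm_sq_eq_eLpNorm_sq]
    _ ≤ _ := pow_add_pow_le zero_le zero_le two_ne_zero
  calc ∫⁻ x in S, (‖f x‖ₑ ^ 2 + ‖g x‖ₑ ^ 2) ∂μ
      ≤ ∫⁻ x in S, (2 * (‖f x - u x‖ₑ ^ 2 + ‖g x - v x‖ₑ ^ 2)
          + 2 * (‖u x‖ₑ ^ 2 + ‖v x‖ₑ ^ 2)) ∂μ := lintegral_mono fun x =>
        (add_le_add (enorm_sq_le_two_mul (f x) (u x)) (enorm_sq_le_two_mul (g x) (v x))).trans_eq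
          (by ring)
    _ = 2 * ∫⁻ x in S, (‖f x - u x‖ₑ ^ 2 + ‖g x - v x‖ₑ ^ 2) ∂μ
          + 2 * ∫⁻ x in S, (‖u x‖ₑ ^ 2 + ‖v x‖ₑ ^ 2) ∂μ := by
      have hm : AEMeasurable (fun x => 2 * (‖u x‖ₑ ^ 2 + ‖v x‖ₑ ^ 2)) (μ.restrict S) :=
        (((hu.enorm.pow_const 2).add (hv.enorm.pow_const 2)).const_mul 2).restrict
      rw [lintegral_add_right' _ hm, lintegral_const_mul' _ _ ENNReal.ofNat_ne_top,
        lintegral_const_mul' _ _ ENNReal.ofNat_ne_top]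
    _ ≤ _ := by grw [hdiff]

end SquareIntegrable

lemma exists_lt_one_forall_of_eventually_nhdsGT {p : ℝ → Prop} (hp : ∀ᶠ h in 𝓝[>] 0, p h) :
    ∃ δ : ℝ, 0 < δ ∧ δ < 1 ∧ ∀ h, 0 < h → h < δ → p h := by
  obtain ⟨w, hw, hsub⟩ := mem_nhdsGT_iff_exists_Ioo_subset.1 hp
  exact ⟨min w (1 / 2), lt_min hw (by norm_num), by linarith [min_le_right w (1 / 2)],
    fun h h0 hh => hsub ⟨h0, hh.trans_le (min_le_left _ _)⟩⟩

theorem stmt14_general (m α β : ℝ)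
    (U V : ℝ → ℕ → ℤ → ℂ)
    (hQLB : ∀ h : ℝ, 0 < h → h < 1 → IsQLB h m α β (U h) (V h))
    (u₀ v₀ : ℝ → ℂ) (hu₀ : MemLp u₀ 2 (volume : Measure ℝ))
    (hv₀ : MemLp v₀ 2 (volume : Measure ℝ))
    (hconv : Tendsto (fun h : ℝ =>
        eLpNorm (fun x => interp h (U h) x 0 - u₀ x) 2 (volume : Measure ℝ)
        + eLpNorm (fun x => interp h (V h) x 0 - v₀ x) 2 (volume : Measure ℝ))
      (nhdsWithin 0 (Set.Ioi 0)) (nhds 0)) :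
    ∀ ε > (0 : ℝ), ∃ A > (0 : ℝ), ∃ hε : ℝ, 0 < hε ∧ hε < 1 ∧
      ∀ h : ℝ, 0 < h → h < hε → ∀ t : ℝ, 0 ≤ t →
        (∫ x in {x : ℝ | A + t ≤ |x|},
          (‖interp h (U h) x t‖ ^ 2 + ‖interp h (V h) x t‖ ^ 2)) ≤ ε := by
  intro ε hε
  have hε2 : 0 < ENNReal.ofReal ε / 2 := ENNReal.half_pos (ENNReal.ofReal_pos.2 hε).ne'
  have hT := ENNReal.Tendsto.const_mul (a := 2)
    (tendsto_setLIntegral_abs_ge_atTop (hu₀.lintegral_enorm_sq_add_ne_top hv₀)) (.inr (by simp))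
  have hD := ENNReal.Tendsto.const_mul (a := 2) (ENNReal.Tendsto.pow (n := 2) hconv) (.inr (by simp))
  simp only [mul_zero, zero_pow two_ne_zero] at hT hD
  obtain ⟨A, hTA, hA⟩ := ((hT.eventually_lt_const hε2).and (eventually_gt_atTop 0)).exists
  obtain ⟨δ, hδ, hδ1, hDδ⟩ :=
    exists_lt_one_forall_of_eventually_nhdsGT (hD.eventually_lt_const hε2)
  refine ⟨A, hA, δ, hδ, hδ1, fun h h0 hhδ t ht => ?_⟩
  rw [setIntegral_interp_norm_sq_add]
  refine ENNReal.toReal_le_of_le_ofReal hε.le ?_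
  calc _ ≤ ∫⁻ x in {x | A ≤ |x|}, cellEnergy h (U h 0) (V h 0) x :=
        (hQLB h h0 (hhδ.trans hδ1)).setLIntegral_cellEnergy_le h0 A ht
    _ = ∫⁻ x in {x | A ≤ |x|}, (‖interp h (U h) x 0‖ₑ ^ 2 + ‖interp h (V h) x 0‖ₑ ^ 2) := by
        simp only [cellEnergy, interp, zero_div, Nat.floor_zero]
    _ ≤ _ := setLIntegral_enorm_sq_add_le (measurable_interp h 0 (V h)).aestronglyMeasurable
        hu₀.1 hv₀.1 _
    _ ≤ ENNReal.ofReal ε :=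
        (ENNReal.add_lt_add (hDδ h h0 hhδ) hTA).le.trans_eq (ENNReal.add_halves _)

/-- Uniform smallness of the tails: for every `ε > 0` there are `A_ε > 0` and
`h_ε ∈ (0,1)` with `∫_{|x| ≥ A_ε + t} (|u^{(h)}|² + |v^{(h)}|²) dx ≤ ε` for all
`h ∈ (0, h_ε)` and `t ≥ 0`. -/
theorem stmt14 (m α β : ℝ) (hm : 0 ≤ m)
    (U V : ℝ → ℕ → ℤ → ℂ)
    (hQLB : ∀ h : ℝ, 0 < h → h < 1 → IsQLB h m α β (U h) (V h))
    (u₀ v₀ : ℝ → ℂ) (hu₀ : MemLp u₀ 2 (volume : Measure ℝ))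
    (hv₀ : MemLp v₀ 2 (volume : Measure ℝ))
    (hbdd : ∃ M : ℝ, ∀ h : ℝ, 0 < h → h < 1 →
      eLpNorm (fun x => interp h (U h) x 0) 2 (volume : Measure ℝ) ≤ ENNReal.ofReal M ∧
      eLpNorm (fun x => interp h (V h) x 0) 2 (volume : Measure ℝ) ≤ ENNReal.ofReal M)
    (hconv : Tendsto (fun h : ℝ =>
        eLpNorm (fun x => interp h (U h) x 0 - u₀ x) 2 (volume : Measure ℝ)
        + eLpNorm (fun x => interp h (V h) x 0 - v₀ x) 2 (volume : Measure ℝ))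
      (nhdsWithin 0 (Set.Ioi 0)) (nhds 0)) :
    ∀ ε > (0 : ℝ), ∃ A > (0 : ℝ), ∃ hε : ℝ, 0 < hε ∧ hε < 1 ∧
      ∀ h : ℝ, 0 < h → h < hε → ∀ t : ℝ, 0 ≤ t →
        (∫ x in {x : ℝ | A + t ≤ |x|},
          (‖interp h (U h) x t‖ ^ 2 + ‖interp h (V h) x t‖ ^ 2)) ≤ ε :=
  stmt14_general m α β U V hQLB u₀ v₀ hu₀ hv₀ hconv

end
end

section
/- Let T > 0 and let (u,v) : ℝ × [0,T] → ℂ² be a continuously differentiable solution of the nonlinear Dirac system with M⁰ := 1 + sup_{ℝ×[0,T]}|u| + sup_{ℝ×[0,T]}|v| < ∞ and M¹ := sup_{ℝ×[0,T]}(|∂_t u| + |∂_x u| + |∂_t v| + |∂_x v|) < ∞. For h > 0 set u^k_n = u(nh,kh), v^k_n = v(nh,kh), and define the local truncation errors g^{k,1}_n = ∫₀¹ [i m v + i(α u|v|² + β G(u,v) v)]((n+τ)h,(k+τ)h) dτ − (i m/2)(v^{k+1}_{n−1} + v^k_n) − (i α/2)(u^{k+1}_{n+1} + u^k_n)|v^k_n|²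 − (i β/2)(v^{k+1}_{n−1} + v^k_n)·G(u^k_n, v^k_n) and g^{k,2}_n = ∫₀¹ [i m u + i(α v|u|² + β G(u,v) u)]((n−τ)h,(k+τ)h) dτ − (i m/2)(u^{k+1}_{n+1} + u^k_n) − (i α/2)(v^{k+1}_{n−1} + v^k_n)|u^k_n|² − (i β/2)(u^{k+1}_{n+1} + u^k_n)·G(u^k_n, v^k_n). Then for all h > 0, all l ∈ {1,2}, all n ∈ ℤ and all k ∈ ℕ with (k+1)h ≤ T: |g^{k,l}_n| ≤ 6(m + |α| + |β|)·M¹·(M⁰)²·h. -/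
open Complex MeasureTheory Filter
open scoped ENNReal

noncomputable section

/-- Nonlinearity in the `u`-equation: `i(α u|v|² + β G(u,v) v)`. -/
def NLu (α β : ℝ) (a b : ℂ) : ℂ :=
  Complex.I * ((α : ℂ) * a * ((‖b‖ ^ 2 : ℝ) : ℂ) + (β : ℂ) * Gc a b * b)

/-- Nonlinearity in the `v`-equation: `i(α v|u|² + β G(u,v) u)`. -/
def NLv (α β : ℝ) (a b : ℂ) : ℂ :=
  Complex.I * ((α : ℂ) * b * ((‖a‖ ^ 2 : ℝ) : ℂ) + (β : ℂ) * Gc a b * a)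

/-!
Each truncation error is the average, over the characteristic segment through `(n h, k h)`, of
the right-hand side of the system minus its lattice discretisation. Bounded partial derivatives
make `u` and `v` Lipschitz on the strip `ℝ × [0, T]` for the `ℓ¹` distance, with constant `M¹`
(mean value theorem in each variable), and the three lattice points used by the scheme lie
within `ℓ¹` distance `2h` of every point of the segment. The nonlinearities are cubic, hence
Lipschitz with constant `3 (M⁰)²` on the ball of radius `M⁰`; the symmetric polarization
`2 (x y - x' y') = (x - x') (y + y') + (x + x') (y - y')` is what keeps this constant at `3`
for the `G` term. The `v`-equation reduces to the `u`-equation under the reflection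
`(u, v)(x, t) ↦ (v, u)(-x, t)`.
-/

open Set Topology

section

variable {E : Type*} [NormedAddCommGroup E]

theorem norm_sub_le_of_hasDerivAt_partials [NormedSpace ℝ E] {f : ℝ → ℝ → E} {fx ft : ℝ → E}
    {C x₀ x₁ t₀ t₁ : ℝ}
    (hfx : ∀ y ∈ uIcc x₀ x₁, HasDerivAt (f · t₁) (fx y) y)
    (hft : ∀ s ∈ uIcc t₀ t₁, HasDerivAt (f x₀) (ft s) s)
    (hfx_le : ∀ y ∈ uIcc x₀ x₁, ‖fx y‖ ≤ C) (hft_le : ∀ s ∈ uIcc t₀ t₁, ‖ft s‖ ≤ C) :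
    ‖f x₁ t₁ - f x₀ t₀‖ ≤ C * (|x₁ - x₀| + |t₁ - t₀|) := by
  have hx := (convex_uIcc x₀ x₁).norm_image_sub_le_of_norm_hasDerivWithin_le
    (fun y hy => (hfx y hy).hasDerivWithinAt) hfx_le left_mem_uIcc right_mem_uIcc
  have ht := (convex_uIcc t₀ t₁).norm_image_sub_le_of_norm_hasDerivWithin_le
    (fun s hs => (hft s hs).hasDerivWithinAt) hft_le left_mem_uIcc right_mem_uIcc
  rw [Real.norm_eq_abs] at hx ht
  calc ‖f x₁ t₁ - f x₀ t₀‖ ≤ ‖f x₁ t₁ - f x₀ t₁‖ + ‖f x₀ t₁ - f x₀ t₀‖ :=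
        norm_sub_le_norm_sub_add_norm_sub _ _ _
    _ ≤ C * (|x₁ - x₀| + |t₁ - t₀|) := by linarith

def LipschitzOnStrip (T C : ℝ) (f : ℝ → ℝ → E) : Prop :=
  ∀ x₀ x₁ t₀ t₁ : ℝ, t₀ ∈ Icc 0 T → t₁ ∈ Icc 0 T →
    ‖f x₁ t₁ - f x₀ t₀‖ ≤ C * (|x₁ - x₀| + |t₁ - t₀|)

theorem lipschitzOnStrip_of_hasDerivAt [NormedSpace ℝ E] {f ft fx : ℝ → ℝ → E} {T C : ℝ}
    (hft : ∀ x t, HasDerivAt (f x) (ft x t) t) (hfx : ∀ x t, HasDerivAt (f · t) (fx x t) x)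
    (hC : ∀ x t, t ∈ Icc 0 T → ‖ft x t‖ + ‖fx x t‖ ≤ C) : LipschitzOnStrip T C f := by
  intro x₀ x₁ t₀ t₁ ht₀ ht₁
  have hsub : uIcc t₀ t₁ ⊆ Icc 0 T := uIcc_subset_Icc ht₀ ht₁
  refine norm_sub_le_of_hasDerivAt_partials (fun y _ => hfx y t₁) (fun s _ => hft x₀ s)
    (fun y _ => ?_) (fun s hs => ?_)
  · linarith [hC y t₁ ht₁, norm_nonneg (ft y t₁)]
  · linarith [hC x₀ s (hsub hs), norm_nonneg (fx x₀ s)]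

namespace LipschitzOnStrip

variable {T C : ℝ} {f : ℝ → ℝ → E}

theorem comp_neg (hf : LipschitzOnStrip T C f) : LipschitzOnStrip T C (fun x t => f (-x) t) := by
  intro x₀ x₁ t₀ t₁ ht₀ ht₁
  have := hf (-x₀) (-x₁) t₀ t₁ ht₀ ht₁
  rwa [neg_sub_neg, abs_sub_comm x₀] at this

theorem continuousOn_comp (hf : LipschitzOnStrip T C f) {x t : ℝ → ℝ} {s : Set ℝ}
    (hx : ContinuousOn x s) (ht : ContinuousOn t s) (hts : MapsTo t s (Icc 0 T)) :
    ContinuousOn (fun τ => f (x τ) (t τ)) s := by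
  intro τ hτ
  rw [ContinuousWithinAt, tendsto_iff_norm_sub_tendsto_zero]
  have hlim : Tendsto (fun σ => C * (|x σ - x τ| + |t σ - t τ|)) (𝓝[s] τ)
      (𝓝 (C * (|x τ - x τ| + |t τ - t τ|))) :=
    (((hx τ hτ).sub continuousWithinAt_const).abs.add
      ((ht τ hτ).sub continuousWithinAt_const).abs).const_mul C
  rw [sub_self, sub_self, abs_zero, add_zero, mul_zero] at hlim
  exact squeeze_zero' (Eventually.of_forall fun _ => norm_nonneg _)
    (eventually_nhdsWithin_of_forall fun σ hσ => hf _ _ _ _ (hts hτ) (hts hσ)) hlim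

end LipschitzOnStrip

theorem norm_integral_sub_smul_le [NormedSpace ℝ E] [CompleteSpace E] {f : ℝ → E} {c : E}
    {a b K : ℝ}
    (hf : IntervalIntegrable f volume a b) (hK : ∀ x ∈ uIoc a b, ‖f x - c‖ ≤ K) :
    ‖(∫ x in a..b, f x) - (b - a) • c‖ ≤ K * |b - a| := by
  rw [← intervalIntegral.integral_const,
    ← intervalIntegral.integral_sub hf intervalIntegrable_const]
  exact intervalIntegral.norm_integral_le_of_norm_le_const hK

end

theorem two_mul_norm_mul_sub_mul_le {A : Type*} [NormedCommRing A] [NormedAlgebra ℝ A]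
    (x x' y y' : A) :
    2 * ‖x * y - x' * y'‖ ≤ ‖x - x'‖ * (‖y‖ + ‖y'‖) + (‖x‖ + ‖x'‖) * ‖y - y'‖ := by
  have key : (2 : ℝ) • (x * y - x' * y') = (x - x') * (y + y') + (x + x') * (y - y') := by
    rw [two_smul]; ring
  calc 2 * ‖x * y - x' * y'‖ = ‖(x - x') * (y + y') + (x + x') * (y - y')‖ := by
        rw [← key, norm_smul, Real.norm_two]
    _ ≤ ‖x - x'‖ * ‖y + y'‖ + ‖x + x'‖ * ‖y - y'‖ :=
        (norm_add_le _ _).trans (add_le_add (norm_mul_le _ _) (norm_mul_le _ _))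
    _ ≤ ‖x - x'‖ * (‖y‖ + ‖y'‖) + (‖x‖ + ‖x'‖) * ‖y - y'‖ := by
        gcongr <;> exact norm_add_le _ _

theorem Gc_comm (a b : ℂ) : Gc a b = Gc b a := by
  unfold Gc; ring

theorem NLv_eq_NLu (α β : ℝ) (a b : ℂ) : NLv α β a b = NLu α β b a := by
  unfold NLu NLv; rw [Gc_comm]

theorem norm_Gc_le (a b : ℂ) : ‖Gc a b‖ ≤ 2 * ‖a‖ * ‖b‖ := by
  unfold Gc
  refine (norm_add_le _ _).trans_eq ?_
  simp only [norm_mul, Complex.norm_conj]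
  ring

theorem norm_Gc_sub_Gc_le (a a' b b' : ℂ) :
    ‖Gc a b - Gc a' b'‖ ≤ ‖a - a'‖ * (‖b‖ + ‖b'‖) + (‖a‖ + ‖a'‖) * ‖b - b'‖ := by
  set w := starRingEnd ℂ a * b - starRingEnd ℂ a' * b'
  have hw : Gc a b - Gc a' b' = w + starRingEnd ℂ w := by
    simp only [w, Gc, map_sub, map_mul, Complex.conj_conj]; ring
  have := two_mul_norm_mul_sub_mul_le (starRingEnd ℂ a) (starRingEnd ℂ a') b b'
  rw [← map_sub, Complex.norm_conj, Complex.norm_conj, Complex.norm_conj] at this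
  calc ‖Gc a b - Gc a' b'‖ ≤ ‖w‖ + ‖starRingEnd ℂ w‖ := hw ▸ norm_add_le _ _
    _ = 2 * ‖w‖ := by rw [Complex.norm_conj]; ring
    _ ≤ _ := this

theorem norm_half_add_le {w₁ w₂ : ℂ} {R : ℝ} (h₁ : ‖w₁‖ ≤ R) (h₂ : ‖w₂‖ ≤ R) :
    ‖(w₁ + w₂) / 2‖ ≤ R := by
  rw [norm_div, Complex.norm_two]
  linarith [norm_add_le w₁ w₂]

theorem norm_sub_half_add_le {z w₁ w₂ : ℂ} {δ : ℝ} (h₁ : ‖z - w₁‖ ≤ δ) (h₂ : ‖z - w₂‖ ≤ δ) :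
    ‖z - (w₁ + w₂) / 2‖ ≤ δ := by
  rw [show z - (w₁ + w₂) / 2 = ((z - w₁) + (z - w₂)) / 2 by ring]
  exact norm_half_add_le h₁ h₂

theorem norm_mul_norm_sq_sub_le {a a' b b' : ℂ} {R δ : ℝ} (ha : ‖a‖ ≤ R) (ha' : ‖a'‖ ≤ R)
    (hb : ‖b‖ ≤ R) (hb' : ‖b'‖ ≤ R) (hda : ‖a - a'‖ ≤ δ) (hdb : ‖b - b'‖ ≤ δ) :
    ‖a * ((‖b‖ ^ 2 : ℝ) : ℂ) - a' * ((‖b'‖ ^ 2 : ℝ) : ℂ)‖ ≤ 3 * R ^ 2 * δ := by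
  have hsq : ‖((‖b‖ ^ 2 : ℝ) : ℂ) - ((‖b'‖ ^ 2 : ℝ) : ℂ)‖ ≤ (‖b‖ + ‖b'‖) * ‖b - b'‖ := by
    rw [← Complex.ofReal_sub, Complex.norm_real, Real.norm_eq_abs, sq_sub_sq, abs_mul,
      abs_of_nonneg (by positivity)]
    gcongr
    exact abs_norm_sub_norm_le b b'
  have := two_mul_norm_mul_sub_mul_le a a' ((‖b‖ ^ 2 : ℝ) : ℂ) ((‖b'‖ ^ 2 : ℝ) : ℂ)
  simp only [Complex.norm_real, Real.norm_eq_abs, abs_pow, abs_norm] at this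
  have hR : 0 ≤ R := (norm_nonneg a).trans ha
  have hδ : 0 ≤ δ := (norm_nonneg _).trans hda
  have : 2 * ‖a * ((‖b‖ ^ 2 : ℝ) : ℂ) - a' * ((‖b'‖ ^ 2 : ℝ) : ℂ)‖
      ≤ δ * (R ^ 2 + R ^ 2) + (R + R) * ((R + R) * δ) := by
    refine this.trans ?_
    gcongr
    exact hsq.trans (by gcongr)
  linarith

theorem norm_Gc_mul_sub_le {a a' b b' c c' : ℂ} {R δ : ℝ} (hab : ‖a‖ + ‖b‖ ≤ R)
    (hab' : ‖a'‖ + ‖b'‖ ≤ R) (hc : ‖c‖ ≤ R) (hc' : ‖c'‖ ≤ R) (hda : ‖a - a'‖ ≤ δ)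
    (hdb : ‖b - b'‖ ≤ δ) (hdc : ‖c - c'‖ ≤ δ) :
    ‖Gc a b * c - Gc a' b' * c'‖ ≤ 3 * R ^ 2 * δ := by
  have hR : 0 ≤ R := (norm_nonneg c).trans hc
  have hδ : 0 ≤ δ := (norm_nonneg _).trans hda
  have hG : ∀ x y : ℂ, ‖x‖ + ‖y‖ ≤ R → ‖Gc x y‖ ≤ R ^ 2 / 2 := fun x y hxy => by
    nlinarith [norm_Gc_le x y, sq_nonneg (‖x‖ - ‖y‖), norm_nonneg x, norm_nonneg y]
  have hdG : ‖Gc a b - Gc a' b'‖ ≤ 2 * R * δ := by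
    calc ‖Gc a b - Gc a' b'‖ ≤ ‖a - a'‖ * (‖b‖ + ‖b'‖) + (‖a‖ + ‖a'‖) * ‖b - b'‖ :=
          norm_Gc_sub_Gc_le a a' b b'
      _ ≤ δ * (‖b‖ + ‖b'‖) + (‖a‖ + ‖a'‖) * δ := by gcongr
      _ = δ * ((‖a‖ + ‖b‖) + (‖a'‖ + ‖b'‖)) := by ring
      _ ≤ δ * (R + R) := by gcongr
      _ = 2 * R * δ := by ring
  have := two_mul_norm_mul_sub_mul_le (Gc a b) (Gc a' b') c c'
  have : 2 * ‖Gc a b * c - Gc a' b' * c'‖ ≤ 2 * R * δ * (R + R) + (R ^ 2 / 2 + R ^ 2 / 2) * δ := by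
    refine this.trans ?_
    gcongr
    exacts [hG a b hab, hG a' b' hab']
  nlinarith

theorem norm_rhs_sub_scheme_le {a b a₀ b₀ a₁ b₁ : ℂ} {m α β R δ : ℝ}
    (hab : ‖a‖ + ‖b‖ ≤ R) (hab₀ : ‖a₀‖ + ‖b₀‖ ≤ R) (ha₁ : ‖a₁‖ ≤ R) (hb₁ : ‖b₁‖ ≤ R)
    (hda₀ : ‖a - a₀‖ ≤ δ) (hda₁ : ‖a - a₁‖ ≤ δ) (hdb₀ : ‖b - b₀‖ ≤ δ) (hdb₁ : ‖b - b₁‖ ≤ δ) :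
    ‖I * m * b + NLu α β a b - (I * m / 2 * (b₁ + b₀)
        + I * α / 2 * (a₁ + a₀) * ((‖b₀‖ ^ 2 : ℝ) : ℂ) + I * β / 2 * (b₁ + b₀) * Gc a₀ b₀)‖
      ≤ (|m| + 3 * (|α| + |β|) * R ^ 2) * δ := by
  have ha : ‖a‖ ≤ R := by linarith [norm_nonneg b]
  have hb : ‖b‖ ≤ R := by linarith [norm_nonneg a]
  have ha₀ : ‖a₀‖ ≤ R := by linarith [norm_nonneg b₀]
  have hb₀ : ‖b₀‖ ≤ R := by linarith [norm_nonneg a₀]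
  have hmass := norm_sub_half_add_le hdb₁ hdb₀
  have hcubic := norm_mul_norm_sq_sub_le ha (norm_half_add_le ha₁ ha₀) hb hb₀
    (norm_sub_half_add_le hda₁ hda₀) hdb₀
  have hGc := norm_Gc_mul_sub_le hab hab₀ hb (norm_half_add_le hb₁ hb₀) hda₀ hdb₀ hmass
  have key : I * m * b + NLu α β a b - (I * m / 2 * (b₁ + b₀)
        + I * α / 2 * (a₁ + a₀) * ((‖b₀‖ ^ 2 : ℝ) : ℂ) + I * β / 2 * (b₁ + b₀) * Gc a₀ b₀)
      = I * m * (b - (b₁ + b₀) / 2)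
        + I * α * (a * ((‖b‖ ^ 2 : ℝ) : ℂ) - (a₁ + a₀) / 2 * ((‖b₀‖ ^ 2 : ℝ) : ℂ))
        + I * β * (Gc a b * b - Gc a₀ b₀ * ((b₁ + b₀) / 2)) := by
    unfold NLu; ring
  rw [key]
  refine (norm_add₃_le ..).trans ?_
  simp only [norm_mul, Complex.norm_I, Complex.norm_real, Real.norm_eq_abs, one_mul]
  calc |m| * ‖b - (b₁ + b₀) / 2‖
        + |α| * ‖a * ((‖b‖ ^ 2 : ℝ) : ℂ) - (a₁ + a₀) / 2 * ((‖b₀‖ ^ 2 : ℝ) : ℂ)‖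
        + |β| * ‖Gc a b * b - Gc a₀ b₀ * ((b₁ + b₀) / 2)‖
      ≤ |m| * δ + |α| * (3 * R ^ 2 * δ) + |β| * (3 * R ^ 2 * δ) := by gcongr
    _ = (|m| + 3 * (|α| + |β|) * R ^ 2) * δ := by ring

theorem norm_integral_rhs_sub_scheme_le {a b : ℝ → ℂ} {a₀ b₀ a₁ b₁ : ℂ} {m α β R δ : ℝ}
    (ha : ContinuousOn a (Icc 0 1)) (hb : ContinuousOn b (Icc 0 1))
    (hab : ∀ τ ∈ Icc (0 : ℝ) 1, ‖a τ‖ + ‖b τ‖ ≤ R) (hab₀ : ‖a₀‖ + ‖b₀‖ ≤ R)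
    (ha₁ : ‖a₁‖ ≤ R) (hb₁ : ‖b₁‖ ≤ R)
    (hd : ∀ τ ∈ Icc (0 : ℝ) 1,
      ‖a τ - a₀‖ ≤ δ ∧ ‖a τ - a₁‖ ≤ δ ∧ ‖b τ - b₀‖ ≤ δ ∧ ‖b τ - b₁‖ ≤ δ) :
    ‖(∫ τ in (0 : ℝ)..1, (I * m * b τ + NLu α β (a τ) (b τ))) - I * m / 2 * (b₁ + b₀)
        - I * α / 2 * (a₁ + a₀) * ((‖b₀‖ ^ 2 : ℝ) : ℂ) - I * β / 2 * (b₁ + b₀) * Gc a₀ b₀‖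
      ≤ (|m| + 3 * (|α| + |β|) * R ^ 2) * δ := by
  have hrhs : Continuous fun p : ℂ × ℂ => I * m * p.2 + NLu α β p.1 p.2 := by
    unfold NLu Gc; fun_prop
  have hint : IntervalIntegrable (fun τ => I * m * b τ + NLu α β (a τ) (b τ)) volume 0 1 := by
    refine ContinuousOn.intervalIntegrable ?_
    rw [uIcc_of_le zero_le_one]
    exact hrhs.comp_continuousOn (ha.prodMk hb)
  have := norm_integral_sub_smul_le hint fun τ hτ => by
    have hτ' : τ ∈ Icc (0 : ℝ) 1 := Ioc_subset_Icc_self (by rwa [uIoc_of_le zero_le_one] at hτ)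
    obtain ⟨hda₀, hda₁, hdb₀, hdb₁⟩ := hd τ hτ'
    exact norm_rhs_sub_scheme_le (hab τ hτ') hab₀ ha₁ hb₁ hda₀ hda₁ hdb₀ hdb₁
  rw [sub_sub, sub_sub]
  simpa only [sub_zero, one_smul, abs_one, mul_one, add_assoc] using this

/-- The local truncation error `g^{k,1}_n`, with real `n` and `k`. -/
def truncErrorU (m α β h : ℝ) (u v : ℝ → ℝ → ℂ) (n k : ℝ) : ℂ :=
  (∫ τ in (0 : ℝ)..1,
      (Complex.I * (m : ℂ) * v ((n + τ) * h) ((k + τ) * h)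
        + NLu α β (u ((n + τ) * h) ((k + τ) * h)) (v ((n + τ) * h) ((k + τ) * h))))
    - (Complex.I * (m : ℂ) / 2) * (v ((n - 1) * h) ((k + 1) * h) + v (n * h) (k * h))
    - (Complex.I * (α : ℂ) / 2) * (u ((n + 1) * h) ((k + 1) * h) + u (n * h) (k * h)) *
        ((‖v (n * h) (k * h)‖ ^ 2 : ℝ) : ℂ)
    - (Complex.I * (β : ℂ) / 2) * (v ((n - 1) * h) ((k + 1) * h) + v (n * h) (k * h)) *
        Gc (u (n * h) (k * h)) (v (n * h) (k * h))

/-- The local truncation error `g^{k,2}_n`, with real `n` and `k`. -/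
def truncErrorV (m α β h : ℝ) (u v : ℝ → ℝ → ℂ) (n k : ℝ) : ℂ :=
  (∫ τ in (0 : ℝ)..1,
      (Complex.I * (m : ℂ) * u ((n - τ) * h) ((k + τ) * h)
        + NLv α β (u ((n - τ) * h) ((k + τ) * h)) (v ((n - τ) * h) ((k + τ) * h))))
    - (Complex.I * (m : ℂ) / 2) * (u ((n + 1) * h) ((k + 1) * h) + u (n * h) (k * h))
    - (Complex.I * (α : ℂ) / 2) * (v ((n - 1) * h) ((k + 1) * h) + v (n * h) (k * h)) *
        ((‖u (n * h) (k * h)‖ ^ 2 : ℝ) : ℂ)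
    - (Complex.I * (β : ℂ) / 2) * (u ((n + 1) * h) ((k + 1) * h) + u (n * h) (k * h)) *
        Gc (u (n * h) (k * h)) (v (n * h) (k * h))

theorem truncErrorV_eq_truncErrorU_reflect (m α β h : ℝ) (u v : ℝ → ℝ → ℂ) (n k : ℝ) :
    truncErrorV m α β h u v n k
      = truncErrorU m α β h (fun x t => v (-x) t) (fun x t => u (-x) t) (-n) k := by
  have hτ : ∀ τ, -((-n + τ) * h) = (n - τ) * h := fun τ => by ring
  have hn : -(-n * h) = n * h := by ring
  have hn₁ : -((-n - 1) * h) = (n + 1) * h := by ring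
  simp only [truncErrorU, truncErrorV, NLv_eq_NLu, hτ, hn, hn₁]
  rw [Gc_comm (v _ _)]

theorem norm_truncErrorU_le {u v : ℝ → ℝ → ℂ} {m α β T C R h n k : ℝ}
    (hu : LipschitzOnStrip T C u) (hv : LipschitzOnStrip T C v) (hC : 0 ≤ C)
    (hR : ∀ x t, t ∈ Icc 0 T → ‖u x t‖ + ‖v x t‖ ≤ R)
    (hh : 0 < h) (hk : 0 ≤ k) (hkT : (k + 1) * h ≤ T) :
    ‖truncErrorU m α β h u v n k‖ ≤ (|m| + 3 * (|α| + |β|) * R ^ 2) * (C * (2 * h)) := by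
  have htime : MapsTo (fun τ => (k + τ) * h) (Icc 0 1) (Icc 0 T) := fun τ hτ =>
    ⟨by nlinarith [hτ.1], by nlinarith [hτ.2]⟩
  have ht₀ : k * h ∈ Icc 0 T := by simpa using htime (left_mem_Icc.2 zero_le_one)
  have ht₁ : (k + 1) * h ∈ Icc 0 T := htime (right_mem_Icc.2 zero_le_one)
  have hnear : ∀ f : ℝ → ℝ → ℂ, LipschitzOnStrip T C f → ∀ τ ∈ Icc (0 : ℝ) 1,
      ‖f ((n + τ) * h) ((k + τ) * h) - f (n * h) (k * h)‖ ≤ C * (2 * h) ∧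
      ‖f ((n + τ) * h) ((k + τ) * h) - f ((n + 1) * h) ((k + 1) * h)‖ ≤ C * (2 * h) ∧
      ‖f ((n + τ) * h) ((k + τ) * h) - f ((n - 1) * h) ((k + 1) * h)‖ ≤ C * (2 * h) := by
    intro f hf τ hτ
    have hP := htime hτ
    obtain ⟨hτ₀, hτ₁⟩ := hτ
    refine ⟨(hf _ _ _ _ ht₀ hP).trans (mul_le_mul_of_nonneg_left ?_ hC),
      (hf _ _ _ _ ht₁ hP).trans (mul_le_mul_of_nonneg_left ?_ hC),
      (hf _ _ _ _ ht₁ hP).trans (mul_le_mul_of_nonneg_left ?_ hC)⟩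
    · rw [abs_of_nonneg (by nlinarith), abs_of_nonneg (by nlinarith)]; nlinarith
    · rw [abs_of_nonpos (by nlinarith), abs_of_nonpos (by nlinarith)]; nlinarith
    · rw [abs_of_nonneg (by nlinarith), abs_of_nonpos (by nlinarith)]; nlinarith
  have hpath : ∀ f : ℝ → ℝ → ℂ, LipschitzOnStrip T C f →
      ContinuousOn (fun τ => f ((n + τ) * h) ((k + τ) * h)) (Icc 0 1) :=
    fun f hf => hf.continuousOn_comp (by fun_prop) (by fun_prop) htime
  refine norm_integral_rhs_sub_scheme_le (hpath u hu) (hpath v hv)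
    (fun τ hτ => hR _ _ (htime hτ)) (hR _ _ ht₀)
    (by linarith [hR ((n + 1) * h) _ ht₁, norm_nonneg (v ((n + 1) * h) ((k + 1) * h))])
    (by linarith [hR ((n - 1) * h) _ ht₁, norm_nonneg (u ((n - 1) * h) ((k + 1) * h))])
    fun τ hτ => ?_
  obtain ⟨hu₀, hu₁, -⟩ := hnear u hu τ hτ
  obtain ⟨hv₀, -, hv₁⟩ := hnear v hv τ hτ
  exact ⟨hu₀, hu₁, hv₀, hv₁⟩

theorem norm_truncErrorV_le {u v : ℝ → ℝ → ℂ} {m α β T C R h n k : ℝ}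
    (hu : LipschitzOnStrip T C u) (hv : LipschitzOnStrip T C v) (hC : 0 ≤ C)
    (hR : ∀ x t, t ∈ Icc 0 T → ‖u x t‖ + ‖v x t‖ ≤ R)
    (hh : 0 < h) (hk : 0 ≤ k) (hkT : (k + 1) * h ≤ T) :
    ‖truncErrorV m α β h u v n k‖ ≤ (|m| + 3 * (|α| + |β|) * R ^ 2) * (C * (2 * h)) := by
  rw [truncErrorV_eq_truncErrorU_reflect]
  exact norm_truncErrorU_le hv.comp_neg hu.comp_neg hC
    (fun x t ht => (add_comm _ _).trans_le (hR (-x) t ht)) hh hk hkT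

theorem stmt18_general (m α β T : ℝ) (hm : 0 ≤ m)
    (u v ut ux vt vx : ℝ → ℝ → ℂ)
    (hut : ∀ x t : ℝ, HasDerivAt (fun s => u x s) (ut x t) t)
    (hux : ∀ x t : ℝ, HasDerivAt (fun y => u y t) (ux x t) x)
    (hvt : ∀ x t : ℝ, HasDerivAt (fun s => v x s) (vt x t) t)
    (hvx : ∀ x t : ℝ, HasDerivAt (fun y => v y t) (vx x t) x)
    (M0 M1 : ℝ)
    (hM0 : ∀ x t : ℝ, t ∈ Set.Icc (0 : ℝ) T →
      1 + ‖u x t‖ + ‖v x t‖ ≤ M0)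
    (hM1 : ∀ x t : ℝ, t ∈ Set.Icc (0 : ℝ) T →
      ‖ut x t‖ + ‖ux x t‖
        + ‖vt x t‖ + ‖vx x t‖ ≤ M1)
    (h : ℝ) (hh : 0 < h) (k : ℕ) (n : ℤ) (hkT : ((k : ℝ) + 1) * h ≤ T) :
    let g1 : ℂ := (∫ τ in (0 : ℝ)..1,
        (Complex.I * (m : ℂ) * v (((n : ℝ) + τ) * h) (((k : ℝ) + τ) * h)
          + NLu α β (u (((n : ℝ) + τ) * h) (((k : ℝ) + τ) * h))
              (v (((n : ℝ) + τ) * h) (((k : ℝ) + τ) * h))))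
      - (Complex.I * (m : ℂ) / 2) *
          (v (((n : ℝ) - 1) * h) (((k : ℝ) + 1) * h) + v ((n : ℝ) * h) ((k : ℝ) * h))
      - (Complex.I * (α : ℂ) / 2) *
          (u (((n : ℝ) + 1) * h) (((k : ℝ) + 1) * h) + u ((n : ℝ) * h) ((k : ℝ) * h)) *
          ((‖v ((n : ℝ) * h) ((k : ℝ) * h)‖ ^ 2 : ℝ) : ℂ)
      - (Complex.I * (β : ℂ) / 2) *
          (v (((n : ℝ) - 1) * h) (((k : ℝ) + 1) * h) + v ((n : ℝ) * h) ((k : ℝ) * h)) *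
          Gc (u ((n : ℝ) * h) ((k : ℝ) * h)) (v ((n : ℝ) * h) ((k : ℝ) * h))
    let g2 : ℂ := (∫ τ in (0 : ℝ)..1,
        (Complex.I * (m : ℂ) * u (((n : ℝ) - τ) * h) (((k : ℝ) + τ) * h)
          + NLv α β (u (((n : ℝ) - τ) * h) (((k : ℝ) + τ) * h))
              (v (((n : ℝ) - τ) * h) (((k : ℝ) + τ) * h))))
      - (Complex.I * (m : ℂ) / 2) *
          (u (((n : ℝ) + 1) * h) (((k : ℝ) + 1) * h) + u ((n : ℝ) * h) ((k : ℝ) * h))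
      - (Complex.I * (α : ℂ) / 2) *
          (v (((n : ℝ) - 1) * h) (((k : ℝ) + 1) * h) + v ((n : ℝ) * h) ((k : ℝ) * h)) *
          ((‖u ((n : ℝ) * h) ((k : ℝ) * h)‖ ^ 2 : ℝ) : ℂ)
      - (Complex.I * (β : ℂ) / 2) *
          (u (((n : ℝ) + 1) * h) (((k : ℝ) + 1) * h) + u ((n : ℝ) * h) ((k : ℝ) * h)) *
          Gc (u ((n : ℝ) * h) ((k : ℝ) * h)) (v ((n : ℝ) * h) ((k : ℝ) * h))
    ‖g1‖ ≤ 6 * (m + |α| + |β|) * M1 * M0 ^ 2 * h ∧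
    ‖g2‖ ≤ 6 * (m + |α| + |β|) * M1 * M0 ^ 2 * h := by
  intro g1 g2
  have hk : (k : ℝ) * h ∈ Icc 0 T := ⟨by positivity, by nlinarith⟩
  have hM0_one : 1 ≤ M0 := by
    linarith [hM0 0 _ hk, norm_nonneg (u 0 (k * h)), norm_nonneg (v 0 (k * h))]
  have hM1_nonneg : 0 ≤ M1 := by
    linarith [hM1 0 _ hk, norm_nonneg (ut 0 (k * h)), norm_nonneg (ux 0 (k * h)),
      norm_nonneg (vt 0 (k * h)), norm_nonneg (vx 0 (k * h))]
  have hu : LipschitzOnStrip T M1 u := lipschitzOnStrip_of_hasDerivAt hut hux fun x t ht => by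
    linarith [hM1 x t ht, norm_nonneg (vt x t), norm_nonneg (vx x t)]
  have hv : LipschitzOnStrip T M1 v := lipschitzOnStrip_of_hasDerivAt hvt hvx fun x t ht => by
    linarith [hM1 x t ht, norm_nonneg (ut x t), norm_nonneg (ux x t)]
  have hR : ∀ x t, t ∈ Icc 0 T → ‖u x t‖ + ‖v x t‖ ≤ M0 := fun x t ht => by
    linarith [hM0 x t ht]
  have hconst : (|m| + 3 * (|α| + |β|) * M0 ^ 2) * (M1 * (2 * h))
      ≤ 6 * (m + |α| + |β|) * M1 * M0 ^ 2 * h := by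
    rw [abs_of_nonneg hm]
    nlinarith [mul_nonneg (mul_nonneg (mul_nonneg hm hM1_nonneg) hh.le)
      (by nlinarith : (0 : ℝ) ≤ 6 * M0 ^ 2 - 2)]
  exact ⟨(norm_truncErrorU_le hu hv hM1_nonneg hR hh k.cast_nonneg hkT).trans hconst,
    (norm_truncErrorV_le hu hv hM1_nonneg hR hh k.cast_nonneg hkT).trans hconst⟩

/-- Bound on the local truncation errors of the QLB scheme evaluated on a
continuously differentiable solution of the nonlinear Dirac system. -/
theorem stmt18 (m α β T : ℝ) (hm : 0 ≤ m) (hT : 0 < T)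
    (u v ut ux vt vx : ℝ → ℝ → ℂ)
    (hcut : Continuous fun p : ℝ × ℝ => ut p.1 p.2)
    (hcux : Continuous fun p : ℝ × ℝ => ux p.1 p.2)
    (hcvt : Continuous fun p : ℝ × ℝ => vt p.1 p.2)
    (hcvx : Continuous fun p : ℝ × ℝ => vx p.1 p.2)
    (hut : ∀ x t : ℝ, HasDerivAt (fun s => u x s) (ut x t) t)
    (hux : ∀ x t : ℝ, HasDerivAt (fun y => u y t) (ux x t) x)
    (hvt : ∀ x t : ℝ, HasDerivAt (fun s => v x s) (vt x t) t)
    (hvx : ∀ x t : ℝ, HasDerivAt (fun y => v y t) (vx x t) x)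
    (hpde1 : ∀ x t : ℝ,
      ut x t + ux x t = Complex.I * (m : ℂ) * v x t + NLu α β (u x t) (v x t))
    (hpde2 : ∀ x t : ℝ,
      vt x t - vx x t = Complex.I * (m : ℂ) * u x t + NLv α β (u x t) (v x t))
    (M0 M1 : ℝ)
    (hM0 : ∀ x t : ℝ, t ∈ Set.Icc (0 : ℝ) T →
      1 + ‖u x t‖ + ‖v x t‖ ≤ M0)
    (hM1 : ∀ x t : ℝ, t ∈ Set.Icc (0 : ℝ) T →
      ‖ut x t‖ + ‖ux x t‖
        + ‖vt x t‖ + ‖vx x t‖ ≤ M1)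
    (h : ℝ) (hh : 0 < h) (k : ℕ) (n : ℤ) (hkT : ((k : ℝ) + 1) * h ≤ T) :
    let g1 : ℂ := (∫ τ in (0 : ℝ)..1,
        (Complex.I * (m : ℂ) * v (((n : ℝ) + τ) * h) (((k : ℝ) + τ) * h)
          + NLu α β (u (((n : ℝ) + τ) * h) (((k : ℝ) + τ) * h))
              (v (((n : ℝ) + τ) * h) (((k : ℝ) + τ) * h))))
      - (Complex.I * (m : ℂ) / 2) *
          (v (((n : ℝ) - 1) * h) (((k : ℝ) + 1) * h) + v ((n : ℝ) * h) ((k : ℝ) * h))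
      - (Complex.I * (α : ℂ) / 2) *
          (u (((n : ℝ) + 1) * h) (((k : ℝ) + 1) * h) + u ((n : ℝ) * h) ((k : ℝ) * h)) *
          ((‖v ((n : ℝ) * h) ((k : ℝ) * h)‖ ^ 2 : ℝ) : ℂ)
      - (Complex.I * (β : ℂ) / 2) *
          (v (((n : ℝ) - 1) * h) (((k : ℝ) + 1) * h) + v ((n : ℝ) * h) ((k : ℝ) * h)) *
          Gc (u ((n : ℝ) * h) ((k : ℝ) * h)) (v ((n : ℝ) * h) ((k : ℝ) * h))
    let g2 : ℂ := (∫ τ in (0 : ℝ)..1,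
        (Complex.I * (m : ℂ) * u (((n : ℝ) - τ) * h) (((k : ℝ) + τ) * h)
          + NLv α β (u (((n : ℝ) - τ) * h) (((k : ℝ) + τ) * h))
              (v (((n : ℝ) - τ) * h) (((k : ℝ) + τ) * h))))
      - (Complex.I * (m : ℂ) / 2) *
          (u (((n : ℝ) + 1) * h) (((k : ℝ) + 1) * h) + u ((n : ℝ) * h) ((k : ℝ) * h))
      - (Complex.I * (α : ℂ) / 2) *
          (v (((n : ℝ) - 1) * h) (((k : ℝ) + 1) * h) + v ((n : ℝ) * h) ((k : ℝ) * h)) *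
          ((‖u ((n : ℝ) * h) ((k : ℝ) * h)‖ ^ 2 : ℝ) : ℂ)
      - (Complex.I * (β : ℂ) / 2) *
          (u (((n : ℝ) + 1) * h) (((k : ℝ) + 1) * h) + u ((n : ℝ) * h) ((k : ℝ) * h)) *
          Gc (u ((n : ℝ) * h) ((k : ℝ) * h)) (v ((n : ℝ) * h) ((k : ℝ) * h))
    ‖g1‖ ≤ 6 * (m + |α| + |β|) * M1 * M0 ^ 2 * h ∧
    ‖g2‖ ≤ 6 * (m + |α| + |β|) * M1 * M0 ^ 2 * h :=
  stmt18_general m α β T hm u v ut ux vt vx hut hux hvt hvx M0 M1 hM0 hM1 h hh k n hkT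

end
end
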